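/- For every optimal prefix-free machine V, the quantity Ω̂_V = ∑_{s : H_V(s) < |s|} 2^{-|s|} satisfies 0 < Ω̂_V < Ω_V, where Ω_V = ∑_{p ∈ dom V} 2^{-|p|}. In particular Ω̂_V converges. -/
import Mathlib


/-- A prefix-free machine: a partial computable function on binary strings
whose domain is prefix-free. -/
structure PrefixFreeMachine where
  f : List Bool →. List Bool
  partrec : Partrec f
  prefixFree : ∀ ⦃p q : List Bool⦄, (f p).Dom → (f q).Dom → p <+: q → p = q

/-- Optimality of a prefix-free machine: it simulates every prefix-free
machine with at most a constant overhead in program length. -/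
def PrefixFreeMachine.Optimal (U : PrefixFreeMachine) : Prop :=
  ∀ C : PrefixFreeMachine, ∃ d : ℕ, ∀ p s, s ∈ C.f p →
    ∃ q, s ∈ U.f q ∧ q.length ≤ p.length + d

/-- Program-size complexity `H_U(s)`: the least length of a program for `s`. -/
noncomputable def PrefixFreeMachine.H (U : PrefixFreeMachine) (s : List Bool) : ℕ :=
  sInf {n | ∃ p, s ∈ U.f p ∧ p.length = n}

namespace OmegaHatAux

open Primrec in
lemma primrec_rep : Primrec (fun n : ℕ => List.replicate n false) :=
  (list_map list_range ((const false).comp₂ Primrec₂.right)).of_eq fun n => by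
    simp [List.map_const']

/-- The constant machine with domain `{[]}` outputting `s`. -/
def constMachine (s : List Bool) : PrefixFreeMachine where
  f := fun p => ((if p = [] then some s else none : Option (List Bool)) : Part (List Bool))
  partrec := Computable.ofOption
    ((Primrec.ite (Primrec.eq.comp .id (.const [])) (.const (some s)) (.const none)).to_comp)
  prefixFree := by
    intro p q hp hq _
    rw [Part.ofOption_dom] at hp hq
    by_cases h1 : p = []
    · by_cases h2 : q = []
      · rw [h1, h2]
      · simp [h2] at hq
    · simp [h1] at hp

/-- Under an optimal machine, every string has some program. -/
lemma exists_prog {V : PrefixFreeMachine} (hV : V.Optimal) (s : List Bool) :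
    ∃ p, s ∈ V.f p := by
  obtain ⟨d, hd⟩ := hV (constMachine s)
  obtain ⟨q, hq, -⟩ := hd [] s (by simp [constMachine, Part.mem_ofOption])
  exact ⟨q, hq⟩

lemma H_spec {V : PrefixFreeMachine} (hV : V.Optimal) (s : List Bool) :
    ∃ p, s ∈ V.f p ∧ p.length = V.H s := by
  have hne : {n | ∃ p, s ∈ V.f p ∧ p.length = n}.Nonempty := by
    obtain ⟨p, hp⟩ := exists_prog hV s
    exact ⟨p.length, p, hp, rfl⟩
  exact Nat.sInf_mem hne

lemma H_le {V : PrefixFreeMachine} {s : List Bool} {p : List Bool} (hp : s ∈ V.f p) :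
    V.H s ≤ p.length :=
  Nat.sInf_le ⟨p, hp, rfl⟩

/-- The replicate machine: on input `0^n 1` outputs `0^(2(n+1))`. -/
def repMachine : PrefixFreeMachine where
  f := fun p => ((if p = List.replicate (p.length - 1) false ++ [true]
      then some (List.replicate (2 * p.length) false) else none : Option (List Bool)) :
      Part (List Bool))
  partrec := by
    apply Computable.ofOption
    apply Primrec.to_comp
    have hrhs : Primrec (fun p : List Bool => List.replicate (p.length - 1) false ++ [true]) :=
      Primrec.list_append.comp (primrec_rep.comp (Primrec.pred.comp Primrec.list_length))
        (.const [true])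
    have hout : Primrec (fun p : List Bool => List.replicate (2 * p.length) false) :=
      primrec_rep.comp (Primrec.nat_mul.comp (.const 2) Primrec.list_length)
    exact Primrec.ite (Primrec.eq.comp .id hrhs) (Primrec.option_some.comp hout) (.const none)
  prefixFree := by
    intro p q hp hq hpq
    rw [Part.ofOption_dom] at hp hq
    by_cases h1 : p = List.replicate (p.length - 1) false ++ [true]
    · by_cases h2 : q = List.replicate (q.length - 1) false ++ [true]
      · set a := p.length - 1 with ha
        set b := q.length - 1 with hb
        have hpl : p.length = a + 1 := by rw [h1]; simp
        have hql : q.length = b + 1 := by rw [h2]; simp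
        have hab : a ≤ b := by
          have := hpq.length_le
          omega
        rcases eq_or_lt_of_le hab with h | h
        · exact hpq.eq_of_length (by omega)
        · exfalso
          obtain ⟨t, ht⟩ := hpq
          have e1 : q[a]? = p[a]? := by
            rw [← ht]
            exact List.getElem?_append_left (by omega)
          have e2 : p[a]? = some true := by
            rw [h1, List.getElem?_append_right (by simp)]
            simp
          have e3 : q[a]? = some false := by
            conv_lhs => rw [h2]
            rw [List.getElem?_append_left (by simp; omega)]
            simp [List.getElem?_replicate, ← hb, h]
          rw [e2, e3] at e1
          simp at e1
      · simp [h2] at hq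
    · simp [h1] at hp

/-- Existence of a compressible string for an optimal machine. -/
lemma exists_compressible {V : PrefixFreeMachine} (hV : V.Optimal) :
    ∃ s : List Bool, V.H s < s.length := by
  obtain ⟨d, hd⟩ := hV repMachine
  set p₀ : List Bool := List.replicate d false ++ [true] with hp₀
  have hlen : p₀.length = d + 1 := by simp [hp₀]
  set s₀ : List Bool := List.replicate (2 * (d + 1)) false with hs₀
  have hmem : s₀ ∈ repMachine.f p₀ := by
    show s₀ ∈ ((if p₀ = List.replicate (p₀.length - 1) false ++ [true]
      then some (List.replicate (2 * p₀.length) false) else none : Option (List Bool)) :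
      Part (List Bool))
    rw [Part.mem_ofOption]
    rw [if_pos (by rw [hlen]; simp [hp₀])]
    rw [hlen]
    simp [hs₀]
  obtain ⟨q, hq, hql⟩ := hd p₀ s₀ hmem
  refine ⟨s₀, lt_of_le_of_lt (H_le hq) ?_⟩
  have : s₀.length = 2 * (d + 1) := by simp [hs₀]
  omega

lemma mem_ofFn_image {q : List Bool} {N : ℕ} (hq : q.length = N) :
    q ∈ (Finset.univ : Finset (Fin N → Bool)).image List.ofFn := by
  subst hq
  exact Finset.mem_image.mpr ⟨fun i => q.get i, Finset.mem_univ _, List.ofFn_get q⟩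

lemma aux_pow {len N : ℕ} (h : len ≤ N) :
    ((2 ^ (N - len) : ℕ) : ℝ) * (2 : ℝ) ^ (-(N : ℝ)) = (2 : ℝ) ^ (-(len : ℝ)) := by
  push_cast
  rw [← Real.rpow_natCast 2 (N - len), ← Real.rpow_add two_pos]
  congr 1
  push_cast [Nat.cast_sub h]
  ring

/-- Finite Kraft inequality for prefix-free finite sets of binary strings. -/
lemma kraft (F : Finset (List Bool)) (hpf : ∀ p ∈ F, ∀ q ∈ F, p <+: q → p = q) :
    ∑ p ∈ F, (2 : ℝ) ^ (-(p.length : ℝ)) ≤ 1 := by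
  set N := F.sup List.length with hN
  have hlen : ∀ p ∈ F, p.length ≤ N := fun p hp => Finset.le_sup hp
  set ext : List Bool → Finset (List Bool) := fun p =>
    (Finset.univ : Finset (Fin (N - p.length) → Bool)).image (fun v => p ++ List.ofFn v)
    with hext
  have hcard : ∀ p : List Bool, (ext p).card = 2 ^ (N - p.length) := by
    intro p
    rw [hext]
    rw [Finset.card_image_of_injective _
      (fun v w h => List.ofFn_inj.mp (List.append_cancel_left h))]
    simp
  have hmem : ∀ p ∈ F, ∀ q ∈ ext p, q.length = N ∧ p <+: q := by
    intro p hp q hq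
    rw [hext] at hq
    obtain ⟨v, -, rfl⟩ := Finset.mem_image.mp hq
    constructor
    · simp [Nat.add_sub_cancel' (hlen p hp)]
    · exact ⟨_, rfl⟩
  have hdisj : ∀ p₁ ∈ F, ∀ p₂ ∈ F, p₁ ≠ p₂ → Disjoint (ext p₁) (ext p₂) := by
    intro p₁ h₁ p₂ h₂ hne
    rw [Finset.disjoint_left]
    intro q hq₁ hq₂
    obtain ⟨-, hpre₁⟩ := hmem p₁ h₁ q hq₁
    obtain ⟨-, hpre₂⟩ := hmem p₂ h₂ q hq₂
    rcases List.prefix_or_prefix_of_prefix hpre₁ hpre₂ with h | h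
    · exact hne (hpf _ h₁ _ h₂ h)
    · exact hne (hpf _ h₂ _ h₁ h).symm
  have hsub : F.biUnion ext ⊆ (Finset.univ : Finset (Fin N → Bool)).image List.ofFn := by
    intro q hq
    obtain ⟨p, hp, hq⟩ := Finset.mem_biUnion.mp hq
    exact mem_ofFn_image (hmem p hp q hq).1
  have hcard_le : (F.biUnion ext).card ≤ 2 ^ N := by
    calc (F.biUnion ext).card ≤ ((Finset.univ : Finset (Fin N → Bool)).image List.ofFn).card :=
          Finset.card_le_card hsub
      _ ≤ (Finset.univ : Finset (Fin N → Bool)).card := Finset.card_image_le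
      _ = 2 ^ N := by simp
  have key : ∑ p ∈ F, ((2 ^ (N - p.length) : ℕ) : ℝ) ≤ ((2 ^ N : ℕ) : ℝ) := by
    rw [← Nat.cast_sum]
    exact_mod_cast calc
      ∑ p ∈ F, 2 ^ (N - p.length) = ∑ p ∈ F, (ext p).card := by
        refine Finset.sum_congr rfl fun p _ => (hcard p).symm
      _ = (F.biUnion ext).card := (Finset.card_biUnion hdisj).symm
      _ ≤ 2 ^ N := hcard_le
  calc ∑ p ∈ F, (2 : ℝ) ^ (-(p.length : ℝ))
      = ∑ p ∈ F, ((2 ^ (N - p.length) : ℕ) : ℝ) * (2 : ℝ) ^ (-(N : ℝ)) :=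
        Finset.sum_congr rfl fun p hp => (aux_pow (hlen p hp)).symm
    _ = (∑ p ∈ F, ((2 ^ (N - p.length) : ℕ) : ℝ)) * (2 : ℝ) ^ (-(N : ℝ)) :=
        (Finset.sum_mul ..).symm
    _ ≤ ((2 ^ N : ℕ) : ℝ) * (2 : ℝ) ^ (-(N : ℝ)) :=
        mul_le_mul_of_nonneg_right key (Real.rpow_nonneg (by norm_num) _)
    _ = 1 := by
        push_cast
        rw [← Real.rpow_natCast 2 N, ← Real.rpow_add two_pos]
        simp

end OmegaHatAux

open OmegaHatAux in
/-- For an optimal prefix-free machine `V`, the sum `Ω̂_V = ∑_{H_V(s)<|s|} 2^{-|s|}`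
over all compressible strings converges and satisfies `0 < Ω̂_V < Ω_V`, where
`Ω_V = ∑_{p ∈ dom V} 2^{-|p|}` is the halting probability of `V`. -/
theorem omegaHat_pos_lt_omega (V : PrefixFreeMachine) (hV : V.Optimal) :
    Summable (fun s : {s : List Bool // V.H s < s.length} =>
      (2 : ℝ) ^ (-(s.1.length : ℝ))) ∧
    0 < (∑' s : {s : List Bool // V.H s < s.length}, (2 : ℝ) ^ (-(s.1.length : ℝ))) ∧
    (∑' s : {s : List Bool // V.H s < s.length}, (2 : ℝ) ^ (-(s.1.length : ℝ))) <
      ∑' p : {p : List Bool // (V.f p).Dom}, (2 : ℝ) ^ (-(p.1.length : ℝ)) := by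
  -- the summand over programs
  set g : {p : List Bool // (V.f p).Dom} → ℝ := fun p => (2 : ℝ) ^ (-(p.1.length : ℝ)) with hg
  set f : {s : List Bool // V.H s < s.length} → ℝ := fun s => (2 : ℝ) ^ (-(s.1.length : ℝ))
    with hf
  have hfpos : ∀ s, 0 < f s := fun s => Real.rpow_pos_of_pos two_pos _
  have hgpos : ∀ p, 0 < g p := fun p => Real.rpow_pos_of_pos two_pos _
  -- summability of Ω_V
  have hgsum : Summable g := by
    apply summable_of_sum_le (c := 1) (fun p => (hgpos p).le)
    intro u
    have := kraft (u.image Subtype.val)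
      (fun p hp q hq hpq => by
        obtain ⟨p', -, rfl⟩ := Finset.mem_image.mp hp
        obtain ⟨q', -, rfl⟩ := Finset.mem_image.mp hq
        exact V.prefixFree p'.2 q'.2 hpq)
    rwa [Finset.sum_image (fun x _ y _ h => Subtype.val_injective h)] at this
  -- minimal programs
  have hmin : ∀ s : {s : List Bool // V.H s < s.length},
      ∃ p : {p : List Bool // (V.f p).Dom}, s.1 ∈ V.f p.1 ∧ p.1.length = V.H s.1 := by
    intro s
    obtain ⟨p, hp, hl⟩ := H_spec hV s.1
    exact ⟨⟨p, Part.dom_iff_mem.mpr ⟨s.1, hp⟩⟩, hp, hl⟩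
  choose φ hφmem hφlen using hmin
  have hφinj : Function.Injective φ := by
    intro s t h
    apply Subtype.ext
    exact Part.mem_unique (hφmem s) (h ▸ hφmem t)
  have hlt : ∀ s, f s < g (φ s) := by
    intro s
    rw [hf, hg]
    apply Real.rpow_lt_rpow_left_iff (x := 2) (by norm_num) |>.mpr
    have := s.2
    have := hφlen s
    simp only [neg_lt_neg_iff]
    exact_mod_cast by omega
  have hgφ : Summable (g ∘ φ) := hgsum.comp_injective hφinj
  have hfsum : Summable f :=
    Summable.of_nonneg_of_le (fun s => (hfpos s).le) (fun s => (hlt s).le) hgφ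
  refine ⟨hfsum, ?_, ?_⟩
  · obtain ⟨s₀, hs₀⟩ := exists_compressible hV
    exact Summable.tsum_pos hfsum (fun s => (hfpos s).le) ⟨s₀, hs₀⟩ (hfpos _)
  · obtain ⟨s₀, hs₀⟩ := exists_compressible hV
    calc (∑' s, f s) < ∑' s, g (φ s) :=
          Summable.tsum_lt_tsum (fun s => (hlt s).le) (hlt ⟨s₀, hs₀⟩) hfsum hgφ
      _ ≤ ∑' p, g p :=
          Summable.tsum_le_tsum_of_inj φ hφinj (fun p _ => (hgpos p).le) (fun s => le_rfl) hgφ hgsum
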